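/- arXiv:1910.06798 — 3 statements merged into one kernel-verified Lean document; each statement's English description precedes it below -/
import Mathlib

section
/- If u ∈ 𝒱, w ∈ 𝒱, and there exists z₀ ∈ ℝ with u(z₀) = w(z₀), then the function v : ℝ → ℝ defined by v(z) = u(z) for z ≤ z₀ and v(z) = w(z) for z > z₀ belongs to 𝒱. -/
/-!
Value functions of polynomial games are closed under adding a polynomial (add it to every
entry), under `min` (Player 1 plays both games, Player 2 chooses which one is scored) and
under `max` (Player 2 plays both games, Player 1 chooses). The value is 1-Lipschitz in the
entries, and every entry satisfies `p z - p z₀ = (z - z₀) * q z`, so there is a polynomial `Q`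
with `|u z - w z| ≤ |z - z₀| * Q z`. For `s = (z - z₀) * Q`, which has the sign of `z - z₀`,
the glued function is `min (max u (w + s)) (max (w - s) w)`.
-/

open Polynomial

/-- The value of a finite two-player zero-sum matrix game with payoff matrix `G`:
`sup` over mixed strategies of Player 1 of `inf` over mixed strategies of Player 2
of the expected payoff. -/
noncomputable def matrixValue {A B : Type} [Fintype A] [Fintype B] (G : A → B → ℝ) : ℝ :=
  ⨆ x : stdSimplex ℝ A, ⨅ y : stdSimplex ℝ B, ∑ a : A, ∑ b : B, x.1 a * G a b * y.1 b

/-- `u ∈ 𝒱`: `u` is the value function of some two-player zero-sum polynomial game,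
i.e. there are finite nonempty strategy sets `A`, `B` and a matrix `G` of real polynomials
such that `u z` is the value of the matrix game `G` evaluated at `z`, for every `z`. -/
def InV (u : ℝ → ℝ) : Prop :=
  ∃ (A B : Type) (iA : Fintype A) (iB : Fintype B), Nonempty A ∧ Nonempty B ∧
    ∃ G : A → B → Polynomial ℝ,
      ∀ z : ℝ, u z = @matrixValue A B iA iB fun a b => (G a b).eval z

open Finset

section ConditionallyCompleteLinearOrder

variable {α ι κ : Type*} [ConditionallyCompleteLinearOrder α]

lemma ciInf_sum_eq_min [Finite ι] [Finite κ] [Nonempty ι] [Nonempty κ] (f : ι ⊕ κ → α) :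
    ⨅ q, f q = min (⨅ i, f (.inl i)) (⨅ j, f (.inr j)) :=
  le_antisymm
    (le_min (le_ciInf fun _ => Finite.ciInf_le f _) (le_ciInf fun _ => Finite.ciInf_le f _))
    (le_ciInf fun
      | .inl i => (min_le_left _ _).trans (Finite.ciInf_le _ i)
      | .inr j => (min_le_right _ _).trans (Finite.ciInf_le _ j))

lemma min_ciSup_le_of_forall [Nonempty ι] [Nonempty κ] {f : ι → α} {g : κ → α} {c : α}
    (h : ∀ i j, min (f i) (g j) ≤ c) : min (⨆ i, f i) (⨆ j, g j) ≤ c := by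
  by_contra! hc
  obtain ⟨i, hi⟩ := exists_lt_of_lt_ciSup (hc.trans_le (min_le_left _ _))
  obtain ⟨j, hj⟩ := exists_lt_of_lt_ciSup (hc.trans_le (min_le_right _ _))
  exact (h i j).not_gt (lt_min hi hj)

end ConditionallyCompleteLinearOrder

section stdSimplex

variable {ι : Type*} [Fintype ι]

lemma ciInf_le_sum_mul_of_mem_stdSimplex [Nonempty ι] (c : ι → ℝ) {y : ι → ℝ}
    (hy : y ∈ stdSimplex ℝ ι) : ⨅ i, c i ≤ ∑ i, c i * y i :=
  calc ⨅ i, c i = ∑ i, (⨅ j, c j) * y i := by rw [← mul_sum, hy.2, mul_one]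
    _ ≤ ∑ i, c i * y i := sum_le_sum fun i _ =>
      mul_le_mul_of_nonneg_right (Finite.ciInf_le c i) (hy.1 i)

lemma sum_mul_le_ciSup_of_mem_stdSimplex [Nonempty ι] (c : ι → ℝ) {y : ι → ℝ}
    (hy : y ∈ stdSimplex ℝ ι) : ∑ i, c i * y i ≤ ⨆ i, c i :=
  calc ∑ i, c i * y i ≤ ∑ i, (⨆ j, c j) * y i := sum_le_sum fun i _ =>
      mul_le_mul_of_nonneg_right (Finite.le_ciSup c i) (hy.1 i)
    _ = ⨆ i, c i := by rw [← mul_sum, hy.2, mul_one]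

lemma iInf_stdSimplex_sum_mul [Nonempty ι] (c : ι → ℝ) :
    ⨅ y : stdSimplex ℝ ι, ∑ i, c i * y.1 i = ⨅ i, c i := by
  classical
  refine le_antisymm (le_ciInf fun i => ?_)
    (le_ciInf fun y => ciInf_le_sum_mul_of_mem_stdSimplex c y.2)
  have hbdd : BddBelow (Set.range fun y : stdSimplex ℝ ι => ∑ i, c i * y.1 i) :=
    ⟨⨅ i, c i, by rintro _ ⟨y, rfl⟩; exact ciInf_le_sum_mul_of_mem_stdSimplex c y.2⟩
  refine (ciInf_le hbdd (stdSimplex.vertex i)).trans_eq ?_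
  simp [Pi.single_apply]

lemma exists_mem_stdSimplex_eq_smul [Nonempty ι] {x : ι → ℝ} (hx : 0 ≤ x) :
    ∃ y ∈ stdSimplex ℝ ι, x = (∑ i, x i) • y := by
  obtain ⟨y⟩ := (inferInstance : Nonempty (stdSimplex ℝ ι))
  rcases (sum_nonneg fun i _ => hx i).eq_or_lt with h | h
  · refine ⟨y, y.2, ?_⟩
    rw [← h, zero_smul]
    exact (Fintype.sum_eq_zero_iff_of_nonneg hx).mp h.symm
  · refine ⟨(∑ i, x i)⁻¹ • x, ⟨fun i => ?_, ?_⟩, ?_⟩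
    · simpa using mul_nonneg (inv_nonneg.2 h.le) (hx i)
    · simp [← mul_sum, h.ne']
    · rw [smul_smul, mul_inv_cancel₀ h.ne', one_smul]

end stdSimplex

section MatrixGame

variable {A B : Type} [Fintype A]

noncomputable def securityLevel (G : A → B → ℝ) (x : A → ℝ) : ℝ :=
  ⨅ b, ∑ a, x a * G a b

lemma securityLevel_zero [Nonempty B] (G : A → B → ℝ) : securityLevel G 0 = 0 := by
  simp [securityLevel]

lemma securityLevel_smul [Nonempty B] (G : A → B → ℝ) {t : ℝ} (ht : 0 ≤ t)
    (x : A → ℝ) : securityLevel G (t • x) = t * securityLevel G x := by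
  simp_rw [securityLevel, Pi.smul_apply, smul_eq_mul, mul_assoc, ← mul_sum]
  exact (Real.mul_iInf_of_nonneg ht _).symm

variable [Fintype B]

lemma matrixValue_eq_iSup_securityLevel [Nonempty A] [Nonempty B] (G : A → B → ℝ) :
    matrixValue G = ⨆ x : stdSimplex ℝ A, securityLevel G x.1 := by
  refine iSup_congr fun x => ?_
  rw [securityLevel, ← iInf_stdSimplex_sum_mul fun b => ∑ a, x.1 a * G a b]
  refine iInf_congr fun y => ?_
  rw [sum_comm]
  simp_rw [sum_mul]

lemma bddAbove_range_securityLevel [Nonempty A] [Nonempty B] (G : A → B → ℝ) :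
    BddAbove (Set.range fun x : stdSimplex ℝ A => securityLevel G x.1) := by
  obtain ⟨b⟩ := (inferInstance : Nonempty B)
  refine ⟨⨆ a, G a b, ?_⟩
  rintro _ ⟨x, rfl⟩
  calc securityLevel G x.1 ≤ ∑ a, x.1 a * G a b := Finite.ciInf_le _ b
    _ ≤ ⨆ a, G a b := by
      simp_rw [mul_comm (x.1 _)]
      exact sum_mul_le_ciSup_of_mem_stdSimplex _ x.2

lemma securityLevel_le_matrixValue [Nonempty A] [Nonempty B] (G : A → B → ℝ)
    (x : stdSimplex ℝ A) : securityLevel G x.1 ≤ matrixValue G := by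
  rw [matrixValue_eq_iSup_securityLevel]
  exact le_ciSup (bddAbove_range_securityLevel G) x

lemma matrixValue_le [Nonempty A] [Nonempty B] {G : A → B → ℝ} {c : ℝ}
    (h : ∀ x : stdSimplex ℝ A, securityLevel G x.1 ≤ c) : matrixValue G ≤ c := by
  rw [matrixValue_eq_iSup_securityLevel]
  exact ciSup_le h

lemma securityLevel_mono {G H : A → B → ℝ} (h : ∀ a b, G a b ≤ H a b) {x : A → ℝ}
    (hx : 0 ≤ x) : securityLevel G x ≤ securityLevel H x :=
  Finite.ciInf_mono fun b => sum_le_sum fun a _ => mul_le_mul_of_nonneg_left (h a b) (hx a)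

lemma matrixValue_mono [Nonempty A] [Nonempty B] {G H : A → B → ℝ}
    (h : ∀ a b, G a b ≤ H a b) : matrixValue G ≤ matrixValue H := by
  simp_rw [matrixValue_eq_iSup_securityLevel]
  exact ciSup_mono (bddAbove_range_securityLevel H) fun x => securityLevel_mono h x.2.1

lemma securityLevel_add_const [Nonempty B] (G : A → B → ℝ) (c : ℝ) {x : A → ℝ}
    (hx : ∑ a, x a = 1) : securityLevel (fun a b => G a b + c) x = securityLevel G x + c := by
  simp_rw [securityLevel, mul_add, sum_add_distrib, ← sum_mul, hx, one_mul]
  exact (ciInf_add (Finite.bddBelow_range _) c).symm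

lemma matrixValue_add_const [Nonempty A] [Nonempty B] (G : A → B → ℝ) (c : ℝ) :
    matrixValue (fun a b => G a b + c) = matrixValue G + c := by
  simp_rw [matrixValue_eq_iSup_securityLevel]
  rw [ciSup_add (bddAbove_range_securityLevel G) c]
  exact iSup_congr fun x => securityLevel_add_const G c x.2.2

lemma abs_matrixValue_sub_le [Nonempty A] [Nonempty B] {G H : A → B → ℝ} {c : ℝ}
    (h : ∀ a b, |G a b - H a b| ≤ c) : |matrixValue G - matrixValue H| ≤ c := by
  have hle {G H : A → B → ℝ} (h : ∀ a b, G a b ≤ H a b + c) :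
      matrixValue G ≤ matrixValue H + c :=
    (matrixValue_mono h).trans_eq (matrixValue_add_const H c)
  rw [abs_sub_le_iff]
  constructor
  · linarith [hle (G := G) (H := H) fun a b => by linarith [(abs_sub_le_iff.1 (h a b)).1]]
  · linarith [hle (G := H) (H := G) fun a b => by linarith [(abs_sub_le_iff.1 (h a b)).2]]

lemma securityLevel_le_sum_mul_matrixValue [Nonempty A] [Nonempty B] (G : A → B → ℝ)
    {x : A → ℝ} (hx : 0 ≤ x) : securityLevel G x ≤ (∑ a, x a) * matrixValue G := by
  obtain ⟨y, hy, hxy⟩ := exists_mem_stdSimplex_eq_smul hx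
  conv_lhs => rw [hxy, securityLevel_smul G (sum_nonneg fun a _ => hx a)]
  exact mul_le_mul_of_nonneg_left (securityLevel_le_matrixValue G ⟨y, hy⟩)
    (sum_nonneg fun a _ => hx a)

end MatrixGame

section GameOperations

variable {A B A' B' M : Type} [Fintype A] [Fintype B] [Fintype A'] [Fintype B']

def minGame (G : A → B → M) (H : A' → B' → M) : A × A' → B ⊕ B' → M :=
  fun p => Sum.elim (G p.1) (H p.2)

def maxGame (G : A → B → M) (H : A' → B' → M) : A ⊕ A' → B × B' → M :=
  fun p q => Sum.elim (G · q.1) (H · q.2) p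

lemma securityLevel_minGame [Nonempty B] [Nonempty B'] (G : A → B → ℝ) (H : A' → B' → ℝ)
    (x : A × A' → ℝ) :
    securityLevel (minGame G H) x =
      min (securityLevel G fun a => ∑ a', x (a, a'))
        (securityLevel H fun a' => ∑ a, x (a, a')) := by
  rw [securityLevel, ciInf_sum_eq_min]
  congr 1 <;> refine iInf_congr fun b => ?_
  · simp only [minGame, Sum.elim_inl, Fintype.sum_prod_type, sum_mul]
  · simp only [minGame, Sum.elim_inr, Fintype.sum_prod_type_right, sum_mul]

lemma mem_stdSimplex_fst_marginal {x : A × A' → ℝ} (hx : x ∈ stdSimplex ℝ (A × A')) :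
    (fun a => ∑ a', x (a, a')) ∈ stdSimplex ℝ A :=
  ⟨fun a => sum_nonneg fun a' _ => hx.1 (a, a'), by rw [← hx.2, Fintype.sum_prod_type]⟩

lemma mem_stdSimplex_snd_marginal {x : A × A' → ℝ} (hx : x ∈ stdSimplex ℝ (A × A')) :
    (fun a' => ∑ a, x (a, a')) ∈ stdSimplex ℝ A' :=
  ⟨fun a' => sum_nonneg fun a _ => hx.1 (a, a'), by rw [← hx.2, Fintype.sum_prod_type_right]⟩

lemma matrixValue_minGame [Nonempty A] [Nonempty B] [Nonempty A'] [Nonempty B']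
    (G : A → B → ℝ) (H : A' → B' → ℝ) :
    matrixValue (minGame G H) = min (matrixValue G) (matrixValue H) := by
  refine le_antisymm (matrixValue_le fun x => ?_) ?_
  · rw [securityLevel_minGame]
    exact min_le_min (securityLevel_le_matrixValue G ⟨_, mem_stdSimplex_fst_marginal x.2⟩)
      (securityLevel_le_matrixValue H ⟨_, mem_stdSimplex_snd_marginal x.2⟩)
  simp_rw [matrixValue_eq_iSup_securityLevel G, matrixValue_eq_iSup_securityLevel H]
  refine min_ciSup_le_of_forall fun x x' => ?_
  -- the product strategy has marginals `x` and `x'`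
  let p : stdSimplex ℝ (A × A') := ⟨fun q => x.1 q.1 * x'.1 q.2,
    fun q => mul_nonneg (x.2.1 q.1) (x'.2.1 q.2),
    by rw [Fintype.sum_prod_type]; simp_rw [← mul_sum, x'.2.2, mul_one, x.2.2]⟩
  have h := securityLevel_le_matrixValue (minGame G H) p
  simpa only [securityLevel_minGame, p, ← mul_sum, ← sum_mul, x.2.2, x'.2.2, mul_one, one_mul]
    using h

lemma securityLevel_maxGame [Nonempty B] [Nonempty B'] (G : A → B → ℝ) (H : A' → B' → ℝ)
    (x : A ⊕ A' → ℝ) :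
    securityLevel (maxGame G H) x =
      securityLevel G (x ∘ .inl) + securityLevel H (x ∘ .inr) := by
  simp only [securityLevel, maxGame, Fintype.sum_sum_type, Sum.elim_inl, Sum.elim_inr,
    Finite.ciInf_prod, Function.comp_apply]
  rw [ciInf_add (Finite.bddBelow_range _)]
  simp_rw [add_ciInf (Finite.bddBelow_range _)]

lemma matrixValue_maxGame [Nonempty A] [Nonempty B] [Nonempty A'] [Nonempty B']
    (G : A → B → ℝ) (H : A' → B' → ℝ) :
    matrixValue (maxGame G H) = max (matrixValue G) (matrixValue H) := by
  refine le_antisymm (matrixValue_le fun x => ?_) (max_le ?_ ?_)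
  · have hsum : ∑ a, x.1 (.inl a) + ∑ a', x.1 (.inr a') = 1 := by
      rw [← Fintype.sum_sum_type]; exact x.2.2
    rw [securityLevel_maxGame]
    calc _ ≤ (∑ a, x.1 (.inl a)) * matrixValue G + (∑ a', x.1 (.inr a')) * matrixValue H :=
          add_le_add (securityLevel_le_sum_mul_matrixValue G fun _ => x.2.1 _)
            (securityLevel_le_sum_mul_matrixValue H fun _ => x.2.1 _)
      _ ≤ (∑ a, x.1 (.inl a)) * max (matrixValue G) (matrixValue H)
          + (∑ a', x.1 (.inr a')) * max (matrixValue G) (matrixValue H) :=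
          add_le_add
            (mul_le_mul_of_nonneg_left (le_max_left _ _) (sum_nonneg fun _ _ => x.2.1 _))
            (mul_le_mul_of_nonneg_left (le_max_right _ _) (sum_nonneg fun _ _ => x.2.1 _))
      _ = max (matrixValue G) (matrixValue H) := by rw [← add_mul, hsum, one_mul]
  · refine matrixValue_le fun x => ?_
    have h := securityLevel_le_matrixValue (maxGame G H)
      ⟨Sum.elim x.1 0, fun | .inl a => x.2.1 a | .inr _ => le_rfl,
        by simpa [Fintype.sum_sum_type] using x.2.2⟩
    rwa [securityLevel_maxGame, Sum.elim_comp_inl, Sum.elim_comp_inr, securityLevel_zero,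
      add_zero] at h
  · refine matrixValue_le fun x => ?_
    have h := securityLevel_le_matrixValue (maxGame G H)
      ⟨Sum.elim 0 x.1, fun | .inl _ => le_rfl | .inr a' => x.2.1 a',
        by simpa [Fintype.sum_sum_type] using x.2.2⟩
    rwa [securityLevel_maxGame, Sum.elim_comp_inl, Sum.elim_comp_inr, securityLevel_zero,
      zero_add] at h

end GameOperations

lemma exists_polynomial_abs_eval_le {ι : Type*} [Fintype ι] (q : ι → ℝ[X]) :
    ∃ Q : ℝ[X], ∀ i z, |(q i).eval z| ≤ Q.eval z := by
  refine ⟨∑ i, (q i ^ 2 + 1), fun i z => ?_⟩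
  simp only [eval_finsetSum, eval_add, eval_pow, eval_one]
  calc |(q i).eval z| ≤ (q i).eval z ^ 2 + 1 := by
        nlinarith [sq_nonneg (|(q i).eval z| - 1), sq_abs ((q i).eval z)]
    _ ≤ ∑ j, ((q j).eval z ^ 2 + 1) :=
        single_le_sum (f := fun j => (q j).eval z ^ 2 + 1) (fun _ _ => by positivity)
          (mem_univ i)

lemma ite_eq_min_max_of_abs_sub_le {a b t : ℝ} {p : Prop} [Decidable p]
    (h : |a - b| ≤ if p then -t else t) :
    (if p then a else b) = min (max a (b + t)) (max (b - t) b) := by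
  split_ifs at h ⊢ <;> obtain ⟨h₁, h₂⟩ := abs_le.mp h
  · rw [max_eq_left (by linarith), max_eq_left (by linarith), min_eq_left (by linarith)]
  · rw [max_eq_right (by linarith), max_eq_right (by linarith), min_eq_right (by linarith)]

namespace InV

lemma of_game {A B : Type} [Fintype A] [Fintype B] [Nonempty A] [Nonempty B]
    (G : A → B → ℝ[X]) : InV fun z => matrixValue fun a b => (G a b).eval z :=
  ⟨A, B, _, _, ‹_›, ‹_›, G, fun _ => rfl⟩

lemma add_polynomial {u : ℝ → ℝ} (hu : InV u) (p : ℝ[X]) : InV fun z => u z + p.eval z := by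
  obtain ⟨A, B, _, _, _, _, G, hG⟩ := hu
  convert of_game fun a b => G a b + p using 1
  simp_rw [eval_add, matrixValue_add_const, hG]

lemma min {u v : ℝ → ℝ} (hu : InV u) (hv : InV v) : InV fun z => min (u z) (v z) := by
  obtain ⟨A, B, _, _, _, _, G, hG⟩ := hu
  obtain ⟨A', B', _, _, _, _, H, hH⟩ := hv
  convert of_game (minGame G H) using 2 with z
  rw [hG, hH, ← matrixValue_minGame]
  congr with p (b | b') <;> rfl

lemma max {u v : ℝ → ℝ} (hu : InV u) (hv : InV v) : InV fun z => max (u z) (v z) := by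
  obtain ⟨A, B, _, _, _, _, G, hG⟩ := hu
  obtain ⟨A', B', _, _, _, _, H, hH⟩ := hv
  convert of_game (maxGame G H) using 2 with z
  rw [hG, hH, ← matrixValue_maxGame]
  congr with (a | a') q <;> rfl

lemma exists_abs_sub_le {u : ℝ → ℝ} (hu : InV u) (z₀ : ℝ) :
    ∃ Q : ℝ[X], ∀ z, |u z - u z₀| ≤ |z - z₀| * Q.eval z := by
  obtain ⟨A, B, _, _, _, _, G, hG⟩ := hu
  choose q hq using fun (ab : A × B) => X_sub_C_dvd_sub_C_eval (p := G ab.1 ab.2) (a := z₀)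
  obtain ⟨Q, hQ⟩ := exists_polynomial_abs_eval_le q
  refine ⟨Q, fun z => ?_⟩
  rw [hG, hG]
  refine abs_matrixValue_sub_le fun a b => ?_
  have := congrArg (eval z) (hq (a, b))
  simp only [eval_sub, eval_C, eval_mul, eval_X] at this
  rw [this, abs_mul]
  exact mul_le_mul_of_nonneg_left (hQ _ z) (abs_nonneg _)

lemma exists_abs_sub_le_of_eq {u w : ℝ → ℝ} (hu : InV u) (hw : InV w) {z₀ : ℝ}
    (h₀ : u z₀ = w z₀) : ∃ Q : ℝ[X], ∀ z, |u z - w z| ≤ |z - z₀| * Q.eval z := by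
  obtain ⟨Qu, hQu⟩ := hu.exists_abs_sub_le z₀
  obtain ⟨Qw, hQw⟩ := hw.exists_abs_sub_le z₀
  refine ⟨Qu + Qw, fun z => ?_⟩
  calc |u z - w z| = |(u z - u z₀) - (w z - w z₀)| := by rw [h₀, sub_sub_sub_cancel_right]
    _ ≤ |u z - u z₀| + |w z - w z₀| := abs_sub _ _
    _ ≤ |z - z₀| * (Qu + Qw).eval z := by
      rw [eval_add, mul_add]
      exact add_le_add (hQu z) (hQw z)

end InV

/-- If `u` and `w` are value functions of polynomial games and `u z₀ = w z₀` for some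
`z₀ ∈ ℝ`, then the function equal to `u` on `(-∞, z₀]` and to `w` on `(z₀, ∞)` is also
the value function of some polynomial game. -/
theorem InV.glue (u w : ℝ → ℝ) (hu : InV u) (hw : InV w) (z₀ : ℝ) (h₀ : u z₀ = w z₀) :
    InV (fun z => if z ≤ z₀ then u z else w z) := by
  obtain ⟨Q, hQ⟩ := hu.exists_abs_sub_le_of_eq hw h₀
  set s : ℝ[X] := (X - C z₀) * Q
  have hs (z : ℝ) : |u z - w z| ≤ if z ≤ z₀ then -s.eval z else s.eval z := by
    refine (hQ z).trans_eq ?_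
    split_ifs with hz
    · simp only [s, eval_mul, eval_sub, eval_X, eval_C, abs_of_nonpos (sub_nonpos.mpr hz)]
      ring
    · simp only [s, eval_mul, eval_sub, eval_X, eval_C,
        abs_of_pos (sub_pos.mpr (not_le.mp hz))]
  have hv := (hu.max (hw.add_polynomial s)).min ((hw.add_polynomial (-s)).max hw)
  simp only [eval_neg, ← sub_eq_add_neg] at hv
  convert hv using 2 with z
  exact ite_eq_min_max_of_abs_sub_le (hs z)
end

section
/- If u ∈ 𝒱 and w ∈ 𝒱, then u·w ∈ 𝒱; that is, if u and w are value functions of polynomial games, then so is the pointwise product z ↦ u(z)·w(z). -/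
open Polynomial

/-!
Fix `z` and let `F = G(z)`, `K = H(z)` have values `v`, `w`. Shifts `s, t ≥ 0`, polynomial in `z`
(`∑ G² + 1` and `∑ H² + 1`), make `F + s` and `K + t` nonnegative. Values are certified by optimal
strategies, which exist by the minimax theorem, and combining optimal strategies shows: games
played side by side add their values, `-c Mᵀ` has value `-c · val M` for `c ≥ 0`, and for
nonnegative games the tensor product game has the product of the values. So `productGame F K s t`
has value `(v + s)(w + t) - s w - t v - s t = v w`.
-/

open Matrix

section StdSimplex

variable {ι κ : Type*} [Fintype ι] [Fintype κ] {p w : ι → ℝ} {c : ℝ}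

lemma le_dotProduct_of_mem_stdSimplex (hp : p ∈ stdSimplex ℝ ι) (h : ∀ i, c ≤ w i) :
    c ≤ w ⬝ᵥ p :=
  calc c = ∑ i, c * p i := by rw [← Finset.mul_sum, hp.2, mul_one]
    _ ≤ w ⬝ᵥ p := Finset.sum_le_sum fun i _ => mul_le_mul_of_nonneg_right (h i) (hp.1 i)

lemma dotProduct_le_of_mem_stdSimplex (hp : p ∈ stdSimplex ℝ ι) (h : ∀ i, w i ≤ c) :
    p ⬝ᵥ w ≤ c :=
  calc p ⬝ᵥ w ≤ ∑ i, p i * c :=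
        Finset.sum_le_sum fun i _ => mul_le_mul_of_nonneg_left (h i) (hp.1 i)
    _ = c := by rw [← Finset.sum_mul, hp.2, one_mul]

lemma nonempty_of_mem_stdSimplex (hp : p ∈ stdSimplex ℝ ι) : Nonempty ι := by
  by_contra h
  rw [not_nonempty_iff] at h
  simpa using hp.2

lemma mem_stdSimplex_prod {q : κ → ℝ} (hp : p ∈ stdSimplex ℝ ι) (hq : q ∈ stdSimplex ℝ κ) :
    (fun i : ι × κ => p i.1 * q i.2) ∈ stdSimplex ℝ (ι × κ) :=
  ⟨fun i => mul_nonneg (hp.1 i.1) (hq.1 i.2), by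
    rw [Fintype.sum_prod_type, ← Finset.sum_mul_sum, hp.2, hq.2, one_mul]⟩

end StdSimplex

section ProductStrategy

variable {A B C D : Type*} [Fintype A] [Fintype C]

lemma vecMul_prod_add {x : A → ℝ} {x' : C → ℝ} (hx : ∑ a, x a = 1) (hx' : ∑ c, x' c = 1)
    (F : Matrix A B ℝ) (K : Matrix C D ℝ) (q : B × D) :
    ((fun p : A × C => x p.1 * x' p.2) ᵥ* of fun p q => F p.1 q.1 + K p.2 q.2) q =
      (x ᵥ* F) q.1 + (x' ᵥ* K) q.2 := by
  have h (a : A) (c : C) : x a * x' c * (F a q.1 + K c q.2) =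
      x a * F a q.1 * x' c + x a * (x' c * K c q.2) := by ring
  simp only [vecMul, dotProduct, of_apply, Fintype.sum_prod_type, h, Finset.sum_add_distrib,
    ← Finset.mul_sum, ← Finset.sum_mul, hx, hx', mul_one, one_mul]

lemma vecMul_prod_mul (x : A → ℝ) (x' : C → ℝ) (F : Matrix A B ℝ) (K : Matrix C D ℝ)
    (q : B × D) :
    ((fun p : A × C => x p.1 * x' p.2) ᵥ* of fun p q => F p.1 q.1 * K p.2 q.2) q =
      (x ᵥ* F) q.1 * (x' ᵥ* K) q.2 := by
  simp only [vecMul, dotProduct, of_apply, Fintype.sum_prod_type, Finset.sum_mul_sum]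
  exact Finset.sum_congr rfl fun a _ => Finset.sum_congr rfl fun c _ => by ring

lemma mulVec_prod_add {y : A → ℝ} {y' : C → ℝ} (hy : ∑ a, y a = 1) (hy' : ∑ c, y' c = 1)
    (F : Matrix B A ℝ) (K : Matrix D C ℝ) (p : B × D) :
    ((of fun p q => F p.1 q.1 + K p.2 q.2 : Matrix (B × D) (A × C) ℝ) *ᵥ
      fun q : A × C => y q.1 * y' q.2) p = (F *ᵥ y) p.1 + (K *ᵥ y') p.2 := by
  rw [← vecMul_transpose, ← vecMul_transpose F, ← vecMul_transpose K]
  exact vecMul_prod_add hy hy' Fᵀ Kᵀ p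

lemma mulVec_prod_mul (y : A → ℝ) (y' : C → ℝ) (F : Matrix B A ℝ) (K : Matrix D C ℝ)
    (p : B × D) :
    ((of fun p q => F p.1 q.1 * K p.2 q.2 : Matrix (B × D) (A × C) ℝ) *ᵥ
      fun q : A × C => y q.1 * y' q.2) p = (F *ᵥ y) p.1 * (K *ᵥ y') p.2 := by
  rw [← vecMul_transpose, ← vecMul_transpose F, ← vecMul_transpose K]
  exact vecMul_prod_mul y y' Fᵀ Kᵀ p

end ProductStrategy

section GameValue

variable {A B C D : Type*} [Fintype A] [Fintype B] [Fintype C] [Fintype D]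

def HasGameValue (M : Matrix A B ℝ) (v : ℝ) : Prop :=
  (∃ x ∈ stdSimplex ℝ A, ∀ b, v ≤ (x ᵥ* M) b) ∧ ∃ y ∈ stdSimplex ℝ B, ∀ a, (M *ᵥ y) a ≤ v

lemma exists_isSaddlePointOn_stdSimplex [Nonempty A] [Nonempty B] (M : Matrix A B ℝ) :
    ∃ y ∈ stdSimplex ℝ B, ∃ x ∈ stdSimplex ℝ A,
      IsSaddlePointOn (stdSimplex ℝ B) (stdSimplex ℝ A) (fun y x => x ⬝ᵥ (M *ᵥ y)) y x := by
  have hA : (stdSimplex ℝ A).Nonempty := Set.nonempty_coe_sort.1 inferInstance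
  have hB : (stdSimplex ℝ B).Nonempty := Set.nonempty_coe_sort.1 inferInstance
  refine Sion.exists_isSaddlePointOn hB (convex_stdSimplex ℝ B) (isCompact_stdSimplex ℝ B)
    (fun x _ => ?_) (fun x _ => ?_) (convex_stdSimplex ℝ A) hA (isCompact_stdSimplex ℝ A)
    (fun y _ => ?_) (fun y _ => ?_)
  · exact (by fun_prop : Continuous fun y => x ⬝ᵥ (M *ᵥ y)).continuousOn.lowerSemicontinuousOn
  · exact ((dotProductBilin ℝ ℝ x ∘ₗ M.mulVecLin).convexOn (convex_stdSimplex ℝ B)).quasiconvexOn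
  · exact (by fun_prop : Continuous fun x => x ⬝ᵥ (M *ᵥ y)).continuousOn.upperSemicontinuousOn
  · exact (((dotProductBilin ℝ ℝ).flip (M *ᵥ y)).concaveOn
      (convex_stdSimplex ℝ A)).quasiconcaveOn

lemma exists_hasGameValue [Nonempty A] [Nonempty B] (M : Matrix A B ℝ) :
    ∃ v, HasGameValue M v := by
  classical
  obtain ⟨y, hy, x, hx, hxy⟩ := exists_isSaddlePointOn_stdSimplex M
  refine ⟨x ⬝ᵥ (M *ᵥ y), ⟨x, hx, fun b => ?_⟩, y, hy, fun a => ?_⟩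
  · simpa only [dotProduct_mulVec, dotProduct_single, mul_one] using
      hxy _ (single_mem_stdSimplex ℝ b) x hx
  · simpa only [single_dotProduct, one_mul] using hxy y hy _ (single_mem_stdSimplex ℝ a)

namespace HasGameValue

variable {F : Matrix A B ℝ} {K : Matrix C D ℝ} {v w : ℝ}

lemma congr {M : Matrix A B ℝ} (h : HasGameValue F v) (hFM : ∀ a b, F a b = M a b)
    (hvw : v = w) : HasGameValue M w := by
  rwa [← hvw, ← Matrix.ext hFM]

lemma nonneg (hF : ∀ a b, 0 ≤ F a b) (h : HasGameValue F v) : 0 ≤ v := by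
  obtain ⟨⟨x, hx, -⟩, y, hy, hvy⟩ := h
  have := nonempty_of_mem_stdSimplex hx
  exact (Finset.sum_nonneg fun b _ => mul_nonneg (hF _ b) (hy.1 b)).trans
    (hvy (Classical.arbitrary A))

lemma add (hF : HasGameValue F v) (hK : HasGameValue K w) :
    HasGameValue (of fun (p : A × C) (q : B × D) => F p.1 q.1 + K p.2 q.2) (v + w) := by
  obtain ⟨⟨x, hx, hvx⟩, y, hy, hvy⟩ := hF
  obtain ⟨⟨x', hx', hwx'⟩, y', hy', hwy'⟩ := hK
  refine ⟨⟨_, mem_stdSimplex_prod hx hx', fun q => ?_⟩,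
    _, mem_stdSimplex_prod hy hy', fun p => ?_⟩
  · rw [vecMul_prod_add hx.2 hx'.2]
    exact add_le_add (hvx q.1) (hwx' q.2)
  · rw [mulVec_prod_add hy.2 hy'.2]
    exact add_le_add (hvy p.1) (hwy' p.2)

lemma mul (hF₀ : ∀ a b, 0 ≤ F a b) (hK₀ : ∀ c d, 0 ≤ K c d) (hF : HasGameValue F v)
    (hK : HasGameValue K w) :
    HasGameValue (of fun (p : A × C) (q : B × D) => F p.1 q.1 * K p.2 q.2) (v * w) := by
  have hv := hF.nonneg hF₀
  have hw := hK.nonneg hK₀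
  obtain ⟨⟨x, hx, hvx⟩, y, hy, hvy⟩ := hF
  obtain ⟨⟨x', hx', hwx'⟩, y', hy', hwy'⟩ := hK
  refine ⟨⟨_, mem_stdSimplex_prod hx hx', fun q => ?_⟩,
    _, mem_stdSimplex_prod hy hy', fun p => ?_⟩
  · rw [vecMul_prod_mul]
    exact mul_le_mul (hvx q.1) (hwx' q.2) hw (hv.trans (hvx q.1))
  · rw [mulVec_prod_mul]
    exact mul_le_mul (hvy p.1) (hwy' p.2)
      (Finset.sum_nonneg fun d _ => mul_nonneg (hK₀ p.2 d) (hy'.1 d)) hv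

lemma neg_transpose (h : HasGameValue F v) : HasGameValue (-Fᵀ) (-v) := by
  obtain ⟨⟨x, hx, hvx⟩, y, hy, hvy⟩ := h
  refine ⟨⟨y, hy, fun a => ?_⟩, x, hx, fun b => ?_⟩
  · simpa [vecMul_neg, vecMul_transpose] using hvy a
  · simpa [neg_mulVec, mulVec_transpose] using hvx b

lemma smul {c : ℝ} (hc : 0 ≤ c) (h : HasGameValue F v) : HasGameValue (c • F) (c * v) := by
  obtain ⟨⟨x, hx, hvx⟩, y, hy, hvy⟩ := h
  refine ⟨⟨x, hx, fun b => ?_⟩, y, hy, fun a => ?_⟩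
  · simpa [vecMul_smul] using mul_le_mul_of_nonneg_left (hvx b) hc
  · simpa [smul_mulVec] using mul_le_mul_of_nonneg_left (hvy a) hc

lemma add_const (c : ℝ) (h : HasGameValue F v) :
    HasGameValue (of fun a b => F a b + c) (v + c) := by
  obtain ⟨⟨x, hx, hvx⟩, y, hy, hvy⟩ := h
  refine ⟨⟨x, hx, fun b => ?_⟩, y, hy, fun a => ?_⟩
  · simpa only [vecMul, dotProduct, of_apply, mul_add, Finset.sum_add_distrib, ← Finset.sum_mul,
      hx.2, one_mul] using add_le_add_left (hvx b) c
  · simpa only [mulVec, dotProduct, of_apply, add_mul, Finset.sum_add_distrib, ← Finset.mul_sum,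
      hy.2, mul_one] using add_le_add_left (hvy a) c

end HasGameValue

end GameValue

section MatrixValue

variable {A B : Type} [Fintype A] [Fintype B]

lemma sum_mul_mul_eq_dotProduct_mulVec (M : Matrix A B ℝ) (x : A → ℝ) (y : B → ℝ) :
    ∑ a, ∑ b, x a * M a b * y b = x ⬝ᵥ (M *ᵥ y) := by
  simp only [dotProduct, mulVec, Finset.mul_sum, mul_assoc]

lemma HasGameValue.matrixValue_eq {M : Matrix A B ℝ} {v : ℝ} (h : HasGameValue M v) :
    matrixValue M = v := by
  obtain ⟨⟨x₀, hx₀, hvx₀⟩, y₀, hy₀, hvy₀⟩ := h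
  have : Nonempty (stdSimplex ℝ A) := ⟨⟨x₀, hx₀⟩⟩
  have : Nonempty (stdSimplex ℝ B) := ⟨⟨y₀, hy₀⟩⟩
  simp only [matrixValue, sum_mul_mul_eq_dotProduct_mulVec]
  have hinf (x : stdSimplex ℝ A) : ⨅ y : stdSimplex ℝ B, x.1 ⬝ᵥ (M *ᵥ y.1) ≤ v := by
    have hbdd : BddBelow (Set.range fun y : stdSimplex ℝ B => x.1 ⬝ᵥ (M *ᵥ y.1)) := by
      simpa only [Set.image_eq_range] using (isCompact_stdSimplex ℝ B).bddBelow_image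
        (by fun_prop : Continuous fun y => x.1 ⬝ᵥ (M *ᵥ y)).continuousOn
    exact (ciInf_le hbdd ⟨y₀, hy₀⟩).trans (dotProduct_le_of_mem_stdSimplex x.2 hvy₀)
  refine le_antisymm (ciSup_le hinf)
    (le_ciSup_of_le ⟨v, Set.forall_mem_range.2 hinf⟩ ⟨x₀, hx₀⟩ ?_)
  exact le_ciInf fun y => dotProduct_mulVec x₀ M y.1 ▸ le_dotProduct_of_mem_stdSimplex y.2 hvx₀

lemma hasGameValue_matrixValue [Nonempty A] [Nonempty B] (M : Matrix A B ℝ) :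
    HasGameValue M (matrixValue M) := by
  obtain ⟨v, hv⟩ := exists_hasGameValue M
  rwa [hv.matrixValue_eq]

end MatrixValue

section ProductGame

variable {A B C D R : Type*} [CommRing R]

def productGame (F : A → B → R) (K : C → D → R) (s t : R) :
    (A × C) × (D × B) → (B × D) × (C × A) → R := fun p q =>
  (F p.1.1 q.1.1 + s) * (K p.1.2 q.1.2 + t) - s * K q.2.1 p.2.1 - t * F q.2.2 p.2.2 - s * t

lemma eval_productGame (F : A → B → R[X]) (K : C → D → R[X]) (s t : R[X]) (z : R) (p q) :
    (productGame F K s t p q).eval z =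
      productGame (fun a b => (F a b).eval z) (fun c d => (K c d).eval z) (s.eval z) (t.eval z)
        p q := by
  simp [productGame]

lemma HasGameValue.productGame [Fintype A] [Fintype B] [Fintype C] [Fintype D]
    {F : Matrix A B ℝ} {K : Matrix C D ℝ} {v w s t : ℝ} (hs : 0 ≤ s) (ht : 0 ≤ t)
    (hFs : ∀ a b, 0 ≤ F a b + s) (hKt : ∀ c d, 0 ≤ K c d + t)
    (hF : HasGameValue F v) (hK : HasGameValue K w) :
    HasGameValue (productGame F K s t) (v * w) := by
  have h := (((hF.add_const s).mul hFs hKt (hK.add_const t)).add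
    ((hK.smul hs).neg_transpose.add (hF.smul ht).neg_transpose)).add_const (-(s * t))
  refine h.congr (fun p q => ?_) (by ring)
  simp only [_root_.productGame, of_apply, Matrix.neg_apply, transpose_apply, Matrix.smul_apply,
    smul_eq_mul]
  ring

end ProductGame

lemma Polynomial.exists_forall_eval_add_nonneg {ι : Type*} [Fintype ι] (g : ι → ℝ[X]) :
    ∃ S : ℝ[X], ∀ z, 0 ≤ S.eval z ∧ ∀ i, 0 ≤ (g i).eval z + S.eval z := by
  refine ⟨∑ i, g i ^ 2 + 1, fun z => ⟨?_, fun i => ?_⟩⟩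
  · simp only [eval_add, eval_finsetSum, eval_pow, eval_one]
    positivity
  · have : (g i).eval z ^ 2 ≤ ∑ j, (g j).eval z ^ 2 :=
      Finset.single_le_sum (f := fun j => (g j).eval z ^ 2) (fun j _ => sq_nonneg _)
        (Finset.mem_univ i)
    simp only [eval_add, eval_finsetSum, eval_pow, eval_one]
    nlinarith [sq_nonneg ((g i).eval z + 1)]

/-- If `u` and `w` are value functions of polynomial games, then so is the pointwise
product `z ↦ u z * w z`. -/
theorem InV.mul (u w : ℝ → ℝ) (hu : InV u) (hw : InV w) :
    InV (fun z => u z * w z) := by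
  obtain ⟨A, B, _, _, _, _, G, hG⟩ := hu
  obtain ⟨C, D, _, _, _, _, H, hH⟩ := hw
  obtain ⟨S, hS⟩ := exists_forall_eval_add_nonneg fun p : A × B => G p.1 p.2
  obtain ⟨T, hT⟩ := exists_forall_eval_add_nonneg fun p : C × D => H p.1 p.2
  refine ⟨_, _, inferInstance, inferInstance, inferInstance, inferInstance,
    productGame G H S T, fun z => ?_⟩
  simp only [hG z, hH z, eval_productGame]
  exact ((hasGameValue_matrixValue _).productGame (hS z).1 (hT z).1 (fun a b => (hS z).2 (a, b))
    (fun c d => (hT z).2 (c, d)) (hasGameValue_matrixValue _)).matrixValue_eq.symm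
end

section
/- Let G_u be an A_u × B_u real matrix and G_w an A_w × B_w real matrix (with A_u, B_u, A_w, B_w finite nonempty sets), and define the sum game G on strategy sets A = A_u × A_w and B = B_u × B_w by G_{(a_u,a_w),(b_u,b_w)} = G_u(a_u,b_u) + G_w(a_w,b_w). Then val(G) = val(G_u) + val(G_w). -/
open Polynomial

/-!
Against mixed strategies `x`, `y` on the product strategy sets, the payoff of the sum game
depends only on the marginals of `x` and `y`: it is the payoff of the first game at the first
marginals plus that of the second game at the second marginals. Every pair of marginals is
realized, by the product distribution, so the worst case of `x` over all `y` is the sum of the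
worst cases of its two marginals, and maximizing over `x` splits in the same way. No minimax
theorem is involved.
-/

open Function Set

theorem Function.Surjective.ciSup_comp {α ι ι' : Type*} [SupSet α] {f : ι → ι'}
    (hf : Surjective f) (g : ι' → α) : ⨆ x, g (f x) = ⨆ y, g y :=
  congrArg sSup (hf.range_comp g)

theorem Function.Surjective.ciInf_comp {α ι ι' : Type*} [InfSet α] {f : ι → ι'}
    (hf : Surjective f) (g : ι' → α) : ⨅ x, g (f x) = ⨅ y, g y :=
  congrArg sInf (hf.range_comp g)

section

variable {G ι κ : Type*} [AddCommGroup G] [ConditionallyCompleteLattice G] [IsOrderedAddMonoid G]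
  [Nonempty ι] [Nonempty κ] {f : ι → G} {g : κ → G}

theorem ciSup_prod_add (hf : BddAbove (range f)) (hg : BddAbove (range g)) :
    ⨆ p : ι × κ, f p.1 + g p.2 = (⨆ i, f i) + ⨆ j, g j := by
  have hfg : BddAbove (range fun p : ι × κ => f p.1 + g p.2) := by
    obtain ⟨M, hM⟩ := hf
    obtain ⟨N, hN⟩ := hg
    exact ⟨M + N, forall_mem_range.2 fun p => add_le_add (hM ⟨p.1, rfl⟩) (hN ⟨p.2, rfl⟩)⟩
  rw [ciSup_prod hfg, ciSup_add hf]
  exact iSup_congr fun i => (add_ciSup hg (f i)).symm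

theorem ciInf_prod_add (hf : BddBelow (range f)) (hg : BddBelow (range g)) :
    ⨅ p : ι × κ, f p.1 + g p.2 = (⨅ i, f i) + ⨅ j, g j :=
  ciSup_prod_add (G := Gᵒᵈ) hf hg

end

namespace stdSimplex

variable {S X Y : Type*} [Semiring S] [PartialOrder S] [IsOrderedRing S]
  [Fintype X] [Fintype Y]

theorem sum_map_mul (f : X → Y) (s : stdSimplex S X) (c : Y → S) :
    ∑ y, map f s y * c y = ∑ x, s x * c (f x) := by
  classical
  simp only [map_coe, FunOnFinite.linearMap_apply_apply, Finset.sum_mul]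
  rw [← Finset.sum_fiberwise Finset.univ f]
  refine Finset.sum_congr rfl fun y _ => Finset.sum_congr rfl fun x hx => ?_
  rw [(Finset.mem_filter.1 hx).2]

def prod (s : stdSimplex S X) (t : stdSimplex S Y) : stdSimplex S (X × Y) :=
  ⟨fun p => s p.1 * t p.2, fun p => mul_nonneg (zero_le s p.1) (zero_le t p.2), by
    rw [Fintype.sum_prod_type, ← Fintype.sum_mul_sum, sum_eq_one, sum_eq_one, one_mul]⟩

@[simp]
theorem prod_apply (s : stdSimplex S X) (t : stdSimplex S Y) (p : X × Y) :
    prod s t p = s p.1 * t p.2 := rfl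

theorem map_fst_apply (s : stdSimplex S (X × Y)) (x : X) : map Prod.fst s x = ∑ y, s (x, y) := by
  classical
  rw [map_coe, FunOnFinite.linearMap_apply_apply, Finset.sum_filter, Fintype.sum_prod_type,
    Finset.sum_eq_single x (fun x' _ hx' => by simp [hx']) (by simp)]
  simp

theorem map_snd_apply (s : stdSimplex S (X × Y)) (y : Y) : map Prod.snd s y = ∑ x, s (x, y) := by
  classical
  rw [map_coe, FunOnFinite.linearMap_apply_apply, Finset.sum_filter, Fintype.sum_prod_type_right,
    Finset.sum_eq_single y (fun y' _ hy' => by simp [hy']) (by simp)]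
  simp

theorem map_fst_prod (s : stdSimplex S X) (t : stdSimplex S Y) : map Prod.fst (prod s t) = s := by
  ext x
  simp [map_fst_apply, ← Finset.mul_sum]

theorem map_snd_prod (s : stdSimplex S X) (t : stdSimplex S Y) : map Prod.snd (prod s t) = t := by
  ext y
  simp [map_snd_apply, ← Finset.sum_mul]

theorem surjective_map_fst_snd :
    Surjective fun s : stdSimplex S (X × Y) => (map Prod.fst s, map Prod.snd s) :=
  fun st => ⟨prod st.1 st.2, Prod.ext (map_fst_prod ..) (map_snd_prod ..)⟩

end stdSimplex

namespace MatrixGame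

open stdSimplex

variable {A B A' B' : Type*} [Fintype A] [Fintype B] [Fintype A'] [Fintype B']

noncomputable def payoff (G : A → B → ℝ) (x : stdSimplex ℝ A) (y : stdSimplex ℝ B) : ℝ :=
  ∑ a, ∑ b, x a * G a b * y b

noncomputable def guarantee (G : A → B → ℝ) (x : stdSimplex ℝ A) : ℝ :=
  ⨅ y, payoff G x y

theorem _root_.matrixValue_eq_iSup_guarantee {A B : Type} [Fintype A] [Fintype B]
    (G : A → B → ℝ) : matrixValue G = ⨆ x, guarantee G x :=
  rfl

def sumGame (Gu : A → B → ℝ) (Gw : A' → B' → ℝ) : A × A' → B × B' → ℝ :=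
  fun a b => Gu a.1 b.1 + Gw a.2 b.2

theorem continuous_payoff (G : A → B → ℝ) :
    Continuous fun p : stdSimplex ℝ A × stdSimplex ℝ B => payoff G p.1 p.2 := by
  have hA (a : A) : Continuous fun x : stdSimplex ℝ A => x a :=
    (continuous_apply a).comp continuous_subtype_val
  have hB (b : B) : Continuous fun y : stdSimplex ℝ B => y b :=
    (continuous_apply b).comp continuous_subtype_val
  exact continuous_finsetSum _ fun a _ => continuous_finsetSum _ fun b _ =>
    (((hA a).comp continuous_fst).mul continuous_const).mul ((hB b).comp continuous_snd)

theorem bddBelow_range_payoff (G : A → B → ℝ) (x : stdSimplex ℝ A) :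
    BddBelow (range (payoff G x)) :=
  (isCompact_range ((continuous_payoff G).comp (Continuous.prodMk_right x))).bddBelow

theorem bddAbove_range_guarantee [Nonempty B] (G : A → B → ℝ) : BddAbove (range (guarantee G)) := by
  obtain ⟨M, hM⟩ := (isCompact_range (continuous_payoff G)).bddAbove
  let y₀ : stdSimplex ℝ B := Classical.arbitrary _
  exact ⟨M, forall_mem_range.2 fun x =>
    (ciInf_le (bddBelow_range_payoff G x) y₀).trans (hM ⟨(x, y₀), rfl⟩)⟩

theorem payoff_eq_sum_mul_sum (G : A → B → ℝ) (x : stdSimplex ℝ A) (y : stdSimplex ℝ B) :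
    payoff G x y = ∑ a, x a * ∑ b, y b * G a b := by
  simp only [payoff, Finset.mul_sum]
  exact Finset.sum_congr rfl fun a _ => Finset.sum_congr rfl fun b _ => by ring

theorem payoff_add (G H : A → B → ℝ) (x : stdSimplex ℝ A) (y : stdSimplex ℝ B) :
    payoff (fun a b => G a b + H a b) x y = payoff G x y + payoff H x y := by
  simp only [payoff, mul_add, add_mul, Finset.sum_add_distrib]

theorem payoff_comp_map (f : A' → A) (g : B' → B) (G : A → B → ℝ)
    (x : stdSimplex ℝ A') (y : stdSimplex ℝ B') :
    payoff (fun a b => G (f a) (g b)) x y = payoff G (map f x) (map g y) := by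
  simp only [payoff_eq_sum_mul_sum, sum_map_mul]

theorem payoff_sumGame (Gu : A → B → ℝ) (Gw : A' → B' → ℝ)
    (x : stdSimplex ℝ (A × A')) (y : stdSimplex ℝ (B × B')) :
    payoff (sumGame Gu Gw) x y =
      payoff Gu (map Prod.fst x) (map Prod.fst y) + payoff Gw (map Prod.snd x) (map Prod.snd y) := by
  rw [← payoff_comp_map, ← payoff_comp_map]
  exact payoff_add _ _ x y

theorem guarantee_sumGame [Nonempty B] [Nonempty B'] (Gu : A → B → ℝ) (Gw : A' → B' → ℝ)
    (x : stdSimplex ℝ (A × A')) :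
    guarantee (sumGame Gu Gw) x = guarantee Gu (map Prod.fst x) + guarantee Gw (map Prod.snd x) :=
  calc guarantee (sumGame Gu Gw) x
      = ⨅ y, payoff Gu (map Prod.fst x) (map Prod.fst y) +
          payoff Gw (map Prod.snd x) (map Prod.snd y) := iInf_congr (payoff_sumGame Gu Gw x)
    _ = ⨅ q : stdSimplex ℝ B × stdSimplex ℝ B',
          payoff Gu (map Prod.fst x) q.1 + payoff Gw (map Prod.snd x) q.2 :=
      surjective_map_fst_snd.ciInf_comp fun q =>
        payoff Gu (map Prod.fst x) q.1 + payoff Gw (map Prod.snd x) q.2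
    _ = _ := ciInf_prod_add (bddBelow_range_payoff _ _) (bddBelow_range_payoff _ _)

end MatrixGame

open MatrixGame stdSimplex

/-- The value of the sum game, in which the players play two matrix games simultaneously
and the payoff is the sum of the two payoffs, is the sum of the two values. -/
theorem matrixValue_sum_game {Au Bu Aw Bw : Type}
    [Fintype Au] [Fintype Bu] [Fintype Aw] [Fintype Bw]
    [Nonempty Au] [Nonempty Bu] [Nonempty Aw] [Nonempty Bw]
    (Gu : Au → Bu → ℝ) (Gw : Aw → Bw → ℝ) :
    matrixValue (fun (a : Au × Aw) (b : Bu × Bw) => Gu a.1 b.1 + Gw a.2 b.2) =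
      matrixValue Gu + matrixValue Gw :=
  calc matrixValue (sumGame Gu Gw)
      = ⨆ x, guarantee (sumGame Gu Gw) x := matrixValue_eq_iSup_guarantee _
    _ = ⨆ x, guarantee Gu (map Prod.fst x) + guarantee Gw (map Prod.snd x) :=
        iSup_congr (guarantee_sumGame Gu Gw)
    _ = ⨆ p : stdSimplex ℝ Au × stdSimplex ℝ Aw, guarantee Gu p.1 + guarantee Gw p.2 :=
      surjective_map_fst_snd.ciSup_comp fun p => guarantee Gu p.1 + guarantee Gw p.2
    _ = (⨆ x, guarantee Gu x) + ⨆ x, guarantee Gw x :=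
      ciSup_prod_add (bddAbove_range_guarantee Gu) (bddAbove_range_guarantee Gw)
    _ = matrixValue Gu + matrixValue Gw := by
      rw [matrixValue_eq_iSup_guarantee, matrixValue_eq_iSup_guarantee]
end
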